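/- arXiv:2211.09509 — 4 statements merged into one kernel-verified Lean document; each statement's English description precedes it below -/
import Mathlib

section
/- Let N ≥ 1, let χ be a Dirichlet character modulo N with conductor f, let c be a positive divisor of N and set d = gcd(c, N/c), so that d² ∣ N and 1 + a·(N/d) is a unit modulo N for every integer a. Then the following are equivalent: (i) f divides N/d; (ii) χ(1 + a·(N/d)) = 1 for every integer a; (iii) χ(1 + a·(N/d)) = 1 for some integer a with gcd(a, d) = 1. -/
/-!
Write `e = N / d`. Since `d² ∣ N`, we have `e² ≡ 0` and `d e ≡ 0 (mod N)`, so every `1 + a e` is a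
unit mod `N` and `a ↦ χ (1 + a e)` is an additive character of `ℤ` that is trivial at `d`. The
units `1 + a e` form the kernel of reduction `(ℤ/N)ˣ → (ℤ/e)ˣ`, which gives (i) ⇔ (ii). An additive
character of `ℤ` trivial at `a` and at `d` with `gcd(a, d) = 1` is trivial at `1 = a p + d q`,
which gives (iii) ⇒ (ii).
-/

theorem Nat.gcd_div_sq_dvd {c n : ℕ} (hc : c ∣ n) : Nat.gcd c (n / c) ^ 2 ∣ n := by
  have := mul_dvd_mul (Nat.gcd_dvd_left c (n / c)) (Nat.gcd_dvd_right c (n / c))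
  rwa [Nat.mul_div_cancel' hc, ← sq] at this

theorem Nat.dvd_div_mul_div_of_sq_dvd {d n : ℕ} (h : d ^ 2 ∣ n) : n ∣ n / d * (n / d) := by
  obtain ⟨k, rfl⟩ := h
  rcases Nat.eq_zero_or_pos d with rfl | hd
  · simp
  · rw [sq, mul_assoc, Nat.mul_div_cancel_left _ hd]
    exact ⟨k, by ring⟩

theorem ZMod.isUnit_intCast_one_add_mul {n m : ℕ} (h : n ∣ m * m) (a : ℤ) :
    IsUnit ((1 + a * m : ℤ) : ZMod n) := by
  push_cast
  refine IsNilpotent.isUnit_one_add ⟨2, ?_⟩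
  rw [mul_pow, sq (m : ZMod n), ← Nat.cast_mul, (ZMod.natCast_eq_zero_iff _ _).2 h, mul_zero]

theorem ZMod.mem_ker_unitsMap_iff {m n : ℕ} (hm : m ∣ n) (u : (ZMod n)ˣ) :
    u ∈ (ZMod.unitsMap hm).ker ↔ ∃ a : ℤ, (u : ZMod n) = ((1 + a * m : ℤ) : ZMod n) := by
  obtain ⟨k, hk⟩ := ZMod.intCast_surjective (u : ZMod n)
  rw [MonoidHom.mem_ker, ← Units.val_inj, ZMod.unitsMap_val, ← hk, ZMod.cast_intCast hm,
    Units.val_one, ← Int.cast_one, ZMod.intCast_eq_intCast_iff_dvd_sub]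
  constructor
  · rintro ⟨a, ha⟩
    exact ⟨-a, by rw [show k = 1 + -a * m by linear_combination -ha]⟩
  · rintro ⟨a, ha⟩
    rw [ZMod.intCast_eq_intCast_iff_dvd_sub] at ha
    rw [show 1 - k = (1 + a * m - k) - a * m by ring]
    exact dvd_sub ((Int.natCast_dvd_natCast.2 hm).trans ha) (dvd_mul_left _ _)

namespace DirichletCharacter

variable {R : Type*} [CommMonoidWithZero R] {n : ℕ} [NeZero n] (χ : DirichletCharacter R n)

theorem conductor_dvd_iff_forall_apply_one_add_mul {m : ℕ} (hm : m ∣ n) :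
    χ.conductor ∣ m ↔
      ∀ a : ℤ, IsUnit ((1 + a * m : ℤ) : ZMod n) → χ ((1 + a * m : ℤ) : ZMod n) = 1 := by
  rw [← mem_conductorSet_iff_conductor_dvd χ hm, mem_conductorSet_iff,
    factorsThrough_iff_ker_unitsMap hm]
  constructor
  · intro h a ha
    have hker : ha.unit ∈ (ZMod.unitsMap hm).ker := (ZMod.mem_ker_unitsMap_iff hm _).2 ⟨a, rfl⟩
    rw [toUnitHom_eq_char' χ ha, h hker, Units.val_one]
  · intro h u hu
    obtain ⟨a, ha⟩ := (ZMod.mem_ker_unitsMap_iff hm u).1 hu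
    rw [MonoidHom.mem_ker, ← Units.val_inj, MulChar.coe_toUnitHom, Units.val_one, ha]
    exact h a (ha ▸ u.isUnit)

end DirichletCharacter

def MulChar.addCharOfSqZero {A R : Type*} [CommRing A] [CommMonoidWithZero R]
    (χ : MulChar A R) {e : A} (he : e * e = 0) : AddChar A R where
  toFun a := χ (1 + a * e)
  map_zero_eq_one' := by simp
  map_add_eq_mul' a b := by
    rw [← map_mul]
    congr 1
    linear_combination -(a * b) * he

theorem AddChar.eq_one_of_apply_eq_one_of_gcd_eq_one {M : Type*} [DivisionMonoid M]
    (ψ : AddChar ℤ M) {a b : ℤ} (ha : ψ a = 1) (hb : ψ b = 1) (hab : Int.gcd a b = 1) :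
    ψ = 1 := by
  have h1 : ψ 1 = 1 := by
    have hbez := Int.gcd_eq_gcd_ab a b
    rw [hab, Nat.cast_one, mul_comm a, mul_comm b, ← smul_eq_mul, ← smul_eq_mul] at hbez
    rw [hbez, map_add_eq_mul, map_zsmul_eq_zpow, map_zsmul_eq_zpow, ha, hb, one_zpow,
      one_zpow, one_mul]
  refine AddChar.eq_one_iff.2 fun x => ?_
  rw [← mul_one x, ← smul_eq_mul, map_zsmul_eq_zpow, h1, one_zpow]

theorem stmt2_general (N : ℕ) (hN : 1 ≤ N) (χ : DirichletCharacter ℂ N)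
    (c : ℕ) (hcN : c ∣ N)
    (d : ℕ) (hd : d = Nat.gcd c (N / c)) :
    d ^ 2 ∣ N ∧
    (∀ a : ℤ, IsUnit (((1 + a * ((N / d : ℕ) : ℤ)) : ℤ) : ZMod N)) ∧
    List.TFAE
      [χ.conductor ∣ N / d,
       ∀ a : ℤ, χ (((1 + a * ((N / d : ℕ) : ℤ)) : ℤ) : ZMod N) = 1,
       ∃ a : ℤ, Int.gcd a d = 1 ∧ χ (((1 + a * ((N / d : ℕ) : ℤ)) : ℤ) : ZMod N) = 1] := by
  have : NeZero N := ⟨by omega⟩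
  have hdN : d ∣ N := hd ▸ (Nat.gcd_dvd_left _ _).trans hcN
  have hd2 : d ^ 2 ∣ N := hd ▸ Nat.gcd_div_sq_dvd hcN
  have hsq : N ∣ N / d * (N / d) := Nat.dvd_div_mul_div_of_sq_dvd hd2
  have hunit := ZMod.isUnit_intCast_one_add_mul hsq
  refine ⟨hd2, hunit, ?_⟩
  have he : ((N / d : ℕ) : ZMod N) * ((N / d : ℕ) : ZMod N) = 0 := by
    rwa [← Nat.cast_mul, ZMod.natCast_eq_zero_iff]
  let ψ := (χ.addCharOfSqZero he).compAddMonoidHom (Int.castAddHom (ZMod N))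
  have hψ (a : ℤ) : ψ a = χ (((1 + a * ((N / d : ℕ) : ℤ)) : ℤ) : ZMod N) := by
    simp only [Int.cast_add, Int.cast_one, Int.cast_mul, Int.cast_natCast]
    rfl
  tfae_have 1 ↔ 2 := by
    simpa only [hunit, true_imp_iff] using
      χ.conductor_dvd_iff_forall_apply_one_add_mul (Nat.div_dvd_of_dvd hdN)
  tfae_have 2 → 3 := fun h => ⟨1, Int.gcd_one_left _, h 1⟩
  tfae_have 3 → 2 := by
    rintro ⟨a, had, ha⟩ b
    have hψd : ψ d = 1 := by
      rw [hψ, Int.cast_add, Int.cast_one, Int.cast_mul, Int.cast_natCast, Int.cast_natCast,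
        ← Nat.cast_mul, Nat.mul_div_cancel' hdN, ZMod.natCast_self, add_zero, map_one]
    rw [← hψ, ψ.eq_one_of_apply_eq_one_of_gcd_eq_one (hψ a ▸ ha) hψd had, AddChar.one_apply]
  tfae_finish

theorem stmt2 (N : ℕ) (hN : 1 ≤ N) (χ : DirichletCharacter ℂ N)
    (c : ℕ) (hc : 0 < c) (hcN : c ∣ N)
    (d : ℕ) (hd : d = Nat.gcd c (N / c)) :
    d ^ 2 ∣ N ∧
    (∀ a : ℤ, IsUnit (((1 + a * ((N / d : ℕ) : ℤ)) : ℤ) : ZMod N)) ∧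
    List.TFAE
      [χ.conductor ∣ N / d,
       ∀ a : ℤ, χ (((1 + a * ((N / d : ℕ) : ℤ)) : ℤ) : ZMod N) = 1,
       ∃ a : ℤ, Int.gcd a d = 1 ∧ χ (((1 + a * ((N / d : ℕ) : ℤ)) : ℤ) : ZMod N) = 1] :=
  stmt2_general N hN χ c hcN d hd
end

section
/- Let N ≥ 1, let χ be a Dirichlet character modulo N with conductor f, let c be a positive divisor of N and set d = gcd(c, N/c). For each unit a ∈ (ℤ/dℤ)ˣ, the value χ(1 + ã·(N/d)) (for any integer lift ã of a) is well defined and is a root of unity, so there is a unique rational number μ′_a ∈ [0,1) with e^{2πi μ′_a} = χ(1 + ã·(N/d)). Then ∑_{a ∈ (ℤ/dℤ)ˣ} μ′_a = 0 if f divides N/d, and ∑_{a ∈ (ℤ/dℤ)ˣ} μ′_a = φ(d)/2 if f does not divide N/d, where φ is Euler's totient function. -/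
/-!
The map `t ↦ 1 + t·(N/d)` is a homomorphism from `ℤ/d` to `(ℤ/N)ˣ`, because `d² ∣ N` makes
`(N/d)²` vanish mod `N`; composed with `χ` it is an additive character `ψ` of `ℤ/d`, and
`μ′_a` is the argument of `ψ(a)` in full turns. The kernel of `(ℤ/N)ˣ → (ℤ/(N/d))ˣ` consists
exactly of the classes `1 + t·(N/d)`, so `ψ` is trivial iff `χ` factors through `N/d`, i.e.
iff `f ∣ N/d`. If `ψ` is trivial all `μ′_a` vanish. Otherwise `ψ(a) ≠ 1` for every unit `a`
(a unit generates `ℤ/d`), so `ψ(-a) = ψ(a)⁻¹` forces `μ′_a + μ′_{-a} = 1`, and pairing `a`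
with `-a` gives the sum `φ(d)/2`.
-/

open scoped Real

/-- The condition that `μ : (ZMod d)ˣ → ℚ` assigns to each unit `a` the number
`μ′_a ∈ [0,1)` with `e^{2πi μ′_a} = χ(1 + ã·(N/d))` for every integer lift `ã` of `a`. -/
def IsMuPrime (N d : ℕ) (χ : DirichletCharacter ℂ N) (μ : (ZMod d)ˣ → ℚ) : Prop :=
  (∀ a : (ZMod d)ˣ, 0 ≤ μ a ∧ μ a < 1) ∧
  ∀ (a : (ZMod d)ˣ) (t : ℤ), (t : ZMod d) = (a : ZMod d) →
    Complex.exp (2 * Real.pi * Complex.I * (μ a : ℂ)) =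
      χ (((1 + t * ((N / d : ℕ) : ℤ)) : ℤ) : ZMod N)

namespace Complex

theorem exp_two_pi_I_mul_ratCast_eq_one_iff (q : ℚ) :
    exp (2 * π * I * q) = 1 ↔ ∃ n : ℤ, q = n := by
  rw [exp_eq_one_iff]
  refine exists_congr fun n ↦ ?_
  rw [mul_comm (n : ℂ), mul_right_inj' two_pi_I_ne_zero]
  exact_mod_cast Iff.rfl

theorem ratCast_eq_of_exp_two_pi_I_mul_eq {q r : ℚ} (hq : q ∈ Set.Ico 0 1)
    (hr : r ∈ Set.Ico 0 1) (h : exp (2 * π * I * q) = exp (2 * π * I * r)) : q = r := by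
  obtain ⟨n, hn⟩ := (exp_two_pi_I_mul_ratCast_eq_one_iff (q - r)).mp <| by
    rw [Rat.cast_sub, mul_sub, exp_sub, h, div_self (exp_ne_zero _)]
  have hn0 : n = 0 := by
    have : (n : ℚ) < 1 ∧ -1 < (n : ℚ) := by
      rw [← hn]; constructor <;> linarith [hq.1, hq.2, hr.1, hr.2]
    have : n < 1 ∧ -1 < n := by exact_mod_cast this
    omega
  rwa [hn0, Int.cast_zero, sub_eq_zero] at hn

theorem exists_ratCast_exp_two_pi_I_mul_eq {n : ℕ} [NeZero n] {z : ℂ} (hz : z ^ n = 1) :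
    ∃ q : ℚ, q ∈ Set.Ico 0 1 ∧ exp (2 * π * I * q) = z := by
  obtain ⟨i, hin, rfl⟩ := (isPrimitiveRoot_exp n (NeZero.ne n)).eq_pow_of_pow_eq_one hz
  have hi : (i / n : ℚ) < 1 :=
    (div_lt_one (by simp [Nat.pos_of_neZero])).mpr (by exact_mod_cast hin)
  refine ⟨i / n, ⟨by positivity, hi⟩, ?_⟩
  rw [← exp_nat_mul]
  congr 1
  push_cast
  field_simp

theorem ratCast_add_eq_one_of_exp_two_pi_I_mul {q r : ℚ} (hq : q ∈ Set.Ico 0 1)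
    (hr : r ∈ Set.Ico 0 1) (hq1 : exp (2 * π * I * q) ≠ 1)
    (h : exp (2 * π * I * q) * exp (2 * π * I * r) = 1) : q + r = 1 := by
  obtain ⟨n, hn⟩ := (exp_two_pi_I_mul_ratCast_eq_one_iff (q + r)).mp <| by
    rwa [Rat.cast_add, mul_add, exp_add]
  have hq0 : 0 < q := hq.1.lt_of_ne fun h0 ↦ hq1 (by simp [← h0])
  have hn1 : n = 1 := by
    have : (0 : ℚ) < n ∧ (n : ℚ) < 2 := by
      rw [← hn]; constructor <;> linarith [hq.2, hr.1, hr.2]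
    have : (0 : ℤ) < n ∧ n < 2 := by exact_mod_cast this
    omega
  rw [hn, hn1, Int.cast_one]

end Complex

theorem Fintype.sum_eq_card_div_two_of_add_neg_eq_one {G K : Type*} [Fintype G] [InvolutiveNeg G]
    [Semifield K] [CharZero K] (f : G → K) (h : ∀ a, f a + f (-a) = 1) :
    ∑ a, f a = Fintype.card G / 2 := by
  have hneg : ∑ a, f (-a) = ∑ a, f a := Fintype.sum_equiv (Equiv.neg G) _ _ fun _ ↦ rfl
  have : ∑ a, f a + ∑ a, f a = Fintype.card G := by
    nth_rewrite 2 [← hneg]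
    simp [← Finset.sum_add_distrib, h]
  rw [eq_div_iff two_ne_zero, mul_two, this]

namespace AddChar

variable {d : ℕ} {M : Type*} [CommMonoid M]

theorem zmod_apply_pow_eq_one (ψ : AddChar (ZMod d) M) (a : ZMod d) : ψ a ^ d = 1 := by
  rw [← map_nsmul_eq_pow, nsmul_eq_mul, ZMod.natCast_self, zero_mul, map_zero_eq_one]

theorem zmod_apply_unit_ne_one [NeZero d] {ψ : AddChar (ZMod d) M} (hψ : ψ ≠ 1) (u : (ZMod d)ˣ) :
    ψ u ≠ 1 := by
  have : ψ.mulShift u ≠ 1 := (mulShift_unit_eq_one_iff ψ u.isUnit).not.mpr hψ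
  rwa [zmod_char_ne_one_iff, mulShift_apply, mul_one] at this

open Complex

variable [NeZero d] (ψ : AddChar (ZMod d) ℂ)

def IsUnitsArg (μ : (ZMod d)ˣ → ℚ) : Prop :=
  ∀ a, μ a ∈ Set.Ico 0 1 ∧ exp (2 * π * I * μ a) = ψ a

theorem existsUnique_isUnitsArg : ∃! μ, ψ.IsUnitsArg μ := by
  choose μ hμ using fun a : (ZMod d)ˣ ↦
    exists_ratCast_exp_two_pi_I_mul_eq (ψ.zmod_apply_pow_eq_one a)
  exact ⟨μ, hμ, fun ν hν ↦ funext fun a ↦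
    ratCast_eq_of_exp_two_pi_I_mul_eq (hν a).1 (hμ a).1 ((hν a).2.trans (hμ a).2.symm)⟩

variable {ψ} {μ : (ZMod d)ˣ → ℚ}

theorem IsUnitsArg.sum_eq_zero (hμ : ψ.IsUnitsArg μ) (hψ : ψ = 1) : ∑ a, μ a = 0 :=
  Finset.sum_eq_zero fun a _ ↦ ratCast_eq_of_exp_two_pi_I_mul_eq (hμ a).1 ⟨le_rfl, one_pos⟩ <| by
    rw [(hμ a).2, hψ, one_apply, Rat.cast_zero, mul_zero, exp_zero]

theorem IsUnitsArg.sum_eq_totient_div_two (hμ : ψ.IsUnitsArg μ) (hψ : ψ ≠ 1) :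
    ∑ a, μ a = Nat.totient d / 2 := by
  rw [← ZMod.card_units_eq_totient]
  refine Fintype.sum_eq_card_div_two_of_add_neg_eq_one μ fun a ↦ ?_
  refine ratCast_add_eq_one_of_exp_two_pi_I_mul (hμ a).1 (hμ (-a)).1
    ((hμ a).2 ▸ zmod_apply_unit_ne_one hψ a) ?_
  rw [(hμ a).2, (hμ (-a)).2, Units.val_neg, ← map_add_eq_mul, add_neg_cancel, map_zero_eq_one]

end AddChar

namespace ZMod

variable {N m : ℕ}

theorem unitsMap_eq_one_iff (hm : m ∣ N) (u : (ZMod N)ˣ) :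
    unitsMap hm u = 1 ↔ ∃ t : ZMod N, (u : ZMod N) = 1 + t * m := by
  rw [Units.ext_iff, unitsMap_val, Units.val_one, ← castHom_apply (h := hm), ← sub_eq_zero,
    ← map_one (castHom hm (ZMod m)), ← map_sub]
  constructor
  · intro h
    obtain ⟨k, hk⟩ := intCast_surjective ((u : ZMod N) - 1)
    rw [← hk, map_intCast, intCast_zmod_eq_zero_iff_dvd] at h
    obtain ⟨j, rfl⟩ := h
    exact ⟨j, by rw [← sub_eq_iff_eq_add', ← hk]; push_cast; ring⟩
  · rintro ⟨t, ht⟩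
    rw [ht, add_sub_cancel_left, map_mul, map_natCast, natCast_self, mul_zero]

def mulByHom {d : ℕ} (e : ℕ) (h : N ∣ d * e) : ZMod d →+ ZMod N :=
  lift d ⟨(AddMonoidHom.mulRight (e : ZMod N)).comp (Int.castAddHom _), by
    simp [← Nat.cast_mul, (natCast_eq_zero_iff _ _).mpr h]⟩

variable {d e : ℕ} (h : N ∣ d * e)

theorem mulByHom_intCast (t : ℤ) : mulByHom e h t = t * e :=
  lift_coe ..

theorem mulByHom_mul_mulByHom (he : N ∣ e * e) (x y : ZMod d) :
    mulByHom e h x * mulByHom e h y = 0 := by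
  obtain ⟨s, rfl⟩ := intCast_surjective x
  obtain ⟨t, rfl⟩ := intCast_surjective y
  rw [mulByHom_intCast, mulByHom_intCast, mul_mul_mul_comm, ← Nat.cast_mul,
    (natCast_eq_zero_iff _ _).mpr he, mul_zero]

end ZMod

def MulChar.onePlusAddChar {A R R' : Type*} [AddMonoid A] [CommRing R] [CommMonoidWithZero R']
    (χ : MulChar R R') (φ : A →+ R) (hφ : ∀ a b, φ a * φ b = 0) : AddChar A R' where
  toFun a := χ (1 + φ a)
  map_zero_eq_one' := by rw [φ.map_zero, add_zero, map_one]
  map_add_eq_mul' a b := by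
    rw [← map_mul, φ.map_add]
    congr 1
    linear_combination -hφ a b

theorem DirichletCharacter.conductor_dvd_iff_forall_apply_one_add_mul_s4 {R : Type*}
    [CommMonoidWithZero R] {N m : ℕ} [NeZero N] (χ : DirichletCharacter R N) (hm : m ∣ N)
    (hmm : N ∣ m * m) : χ.conductor ∣ m ↔ ∀ t : ZMod N, χ (1 + t * m) = 1 := by
  rw [← mem_conductorSet_iff_conductor_dvd χ hm, mem_conductorSet_iff,
    factorsThrough_iff_ker_unitsMap hm]
  constructor
  · intro h t
    have hsq : (t * m) ^ 2 = 0 := by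
      rw [mul_pow, sq (m : ZMod N), ← Nat.cast_mul, (ZMod.natCast_eq_zero_iff _ _).mpr hmm,
        mul_zero]
    obtain ⟨u, hu⟩ := IsNilpotent.isUnit_one_add ⟨2, hsq⟩
    have hker := h ((MonoidHom.mem_ker).mpr ((ZMod.unitsMap_eq_one_iff hm u).mpr ⟨t, hu⟩))
    rwa [MonoidHom.mem_ker, Units.ext_iff, MulChar.coe_toUnitHom, hu] at hker
  · intro h u hu
    obtain ⟨t, ht⟩ := (ZMod.unitsMap_eq_one_iff hm u).mp hu
    rw [MonoidHom.mem_ker, Units.ext_iff, MulChar.coe_toUnitHom, ht, h, Units.val_one]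

theorem Nat.dvd_div_mul_div_of_mul_dvd {N d : ℕ} (hd : d * d ∣ N) : N ∣ N / d * (N / d) := by
  obtain ⟨k, hk⟩ := Nat.dvd_div_of_mul_dvd hd
  refine ⟨k, ?_⟩
  nth_rewrite 2 [hk]
  rw [← mul_assoc, Nat.div_mul_cancel (dvd_of_mul_left_dvd hd)]

namespace DirichletCharacter

variable {R : Type*} [CommMonoidWithZero R] {N d : ℕ} (χ : DirichletCharacter R N)
  (hd : d * d ∣ N)
include hd

/-- The additive character `a ↦ χ(1 + ã·(N/d))` of `ZMod d`. -/
def onePlusMulDivChar : AddChar (ZMod d) R :=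
  χ.onePlusAddChar (ZMod.mulByHom (N / d) (Nat.mul_div_cancel' (dvd_of_mul_left_dvd hd)).symm.dvd)
    (ZMod.mulByHom_mul_mulByHom _ (Nat.dvd_div_mul_div_of_mul_dvd hd))

theorem onePlusMulDivChar_intCast (t : ℤ) :
    χ.onePlusMulDivChar hd t = χ (((1 + t * ((N / d : ℕ) : ℤ) : ℤ)) : ZMod N) := by
  change χ (1 + ZMod.mulByHom _ _ _) = _
  rw [ZMod.mulByHom_intCast, Int.cast_add, Int.cast_one, Int.cast_mul, Int.cast_natCast]

theorem onePlusMulDivChar_eq_one_iff [NeZero N] :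
    χ.onePlusMulDivChar hd = 1 ↔ χ.conductor ∣ N / d := by
  rw [χ.conductor_dvd_iff_forall_apply_one_add_mul_s4 (Nat.div_dvd_of_dvd (dvd_of_mul_left_dvd hd))
    (Nat.dvd_div_mul_div_of_mul_dvd hd), AddChar.eq_one_iff]
  constructor
  · intro h t
    have := h (ZMod.cast t : ℤ)
    rwa [onePlusMulDivChar_intCast, Int.cast_add, Int.cast_one, Int.cast_mul, Int.cast_natCast,
      ZMod.intCast_zmod_cast] at this
  · intro h a
    obtain ⟨t, rfl⟩ := ZMod.intCast_surjective a
    rw [onePlusMulDivChar_intCast, Int.cast_add, Int.cast_one, Int.cast_mul, Int.cast_natCast]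
    exact h t

end DirichletCharacter

theorem isMuPrime_iff_isUnitsArg {N d : ℕ} (χ : DirichletCharacter ℂ N) (hd : d * d ∣ N)
    (μ : (ZMod d)ˣ → ℚ) : IsMuPrime N d χ μ ↔ (χ.onePlusMulDivChar hd).IsUnitsArg μ := by
  constructor
  · intro h a
    refine ⟨h.1 a, ?_⟩
    rw [h.2 a _ (ZMod.intCast_zmod_cast (a : ZMod d)),
      ← DirichletCharacter.onePlusMulDivChar_intCast χ hd, ZMod.intCast_zmod_cast]
  · intro h
    refine ⟨fun a ↦ (h a).1, fun a t ht ↦ ?_⟩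
    rw [(h a).2, ← ht, DirichletCharacter.onePlusMulDivChar_intCast]

theorem stmt4_general (N : ℕ) (hN : 1 ≤ N) (χ : DirichletCharacter ℂ N)
    (c : ℕ) (hcN : c ∣ N)
    (d : ℕ) [NeZero d] (hd : d = Nat.gcd c (N / c)) :
    (∃! μ : (ZMod d)ˣ → ℚ, IsMuPrime N d χ μ) ∧
    ∀ μ : (ZMod d)ˣ → ℚ, IsMuPrime N d χ μ →
      ((χ.conductor ∣ N / d → ∑ a : (ZMod d)ˣ, μ a = 0) ∧
       (¬ χ.conductor ∣ N / d → ∑ a : (ZMod d)ˣ, μ a = (Nat.totient d : ℚ) / 2)) := by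
  have : NeZero N := ⟨by omega⟩
  have hdd : d * d ∣ N :=
    calc d * d ∣ c * (N / c) := hd ▸ mul_dvd_mul (Nat.gcd_dvd_left _ _) (Nat.gcd_dvd_right _ _)
      _ = N := Nat.mul_div_cancel' hcN
  simp_rw [isMuPrime_iff_isUnitsArg χ hdd]
  exact ⟨AddChar.existsUnique_isUnitsArg _, fun μ hμ ↦
    ⟨fun hf ↦ hμ.sum_eq_zero ((χ.onePlusMulDivChar_eq_one_iff hdd).mpr hf),
      fun hf ↦ hμ.sum_eq_totient_div_two (mt (χ.onePlusMulDivChar_eq_one_iff hdd).mp hf)⟩⟩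

theorem stmt4 (N : ℕ) (hN : 1 ≤ N) (χ : DirichletCharacter ℂ N)
    (c : ℕ) (hc : 0 < c) (hcN : c ∣ N)
    (d : ℕ) [NeZero d] (hd : d = Nat.gcd c (N / c)) :
    (∃! μ : (ZMod d)ˣ → ℚ, IsMuPrime N d χ μ) ∧
    ∀ μ : (ZMod d)ˣ → ℚ, IsMuPrime N d χ μ →
      ((χ.conductor ∣ N / d → ∑ a : (ZMod d)ˣ, μ a = 0) ∧
       (¬ χ.conductor ∣ N / d → ∑ a : (ZMod d)ˣ, μ a = (Nat.totient d : ℚ) / 2)) :=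
  stmt4_general N hN χ c hcN d hd
end

section
/- Let N > 1 and let χ be a Dirichlet character modulo N, extended to a homomorphism χ : Γ₀(N) → ℂˣ by χ([[a,b],[c,d]]) = χ(d). Then there exists a group homomorphism χ⁺ : Γ₀⁺(N) → ℂˣ whose restriction to (the image of) Γ₀(N) equals χ if and only if χ² is trivial; and in that case there are exactly two such homomorphisms χ⁺. -/
open Matrix

/-- The Fricke matrix `W_N = [[0, -1/√N], [√N, 0]]`. -/
noncomputable def frickeMat (N : ℕ) : Matrix (Fin 2) (Fin 2) ℝ :=
  !![0, -1 / Real.sqrt N; Real.sqrt N, 0]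

/-- The natural map `SL(2, ℤ) → SL(2, ℝ)`. -/
noncomputable def toSL2R :
    Matrix.SpecialLinearGroup (Fin 2) ℤ →* Matrix.SpecialLinearGroup (Fin 2) ℝ :=
  Matrix.SpecialLinearGroup.map (Int.castRingHom ℝ)

/-- The Fricke group `Γ₀⁺(N)`, the subgroup of `SL(2, ℝ)` generated by the image of `Γ₀(N)`
and the Fricke involution `W_N`. -/
noncomputable def Gamma0Plus (N : ℕ) : Subgroup (Matrix.SpecialLinearGroup (Fin 2) ℝ) :=
  Subgroup.closure
    ((toSL2R '' (CongruenceSubgroup.Gamma0 N : Set (Matrix.SpecialLinearGroup (Fin 2) ℤ))) ∪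
      {g | (g : Matrix (Fin 2) (Fin 2) ℝ) = frickeMat N})

lemma toSL2R_mem_Gamma0Plus (N : ℕ) (γ : CongruenceSubgroup.Gamma0 N) :
    toSL2R (γ : Matrix.SpecialLinearGroup (Fin 2) ℤ) ∈ Gamma0Plus N :=
  Subgroup.subset_closure (Set.mem_union_left _ ⟨γ, γ.2, rfl⟩)

/-- `χ⁺ : Γ₀⁺(N) → ℂˣ` restricts to (the extension to `Γ₀(N)` of) the Dirichlet character `χ`,
i.e. its value at (the image of) `[[a, b], [c, d]] ∈ Γ₀(N)` is `χ(d)`. -/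
def ExtendsPlus (N : ℕ) (χ : DirichletCharacter ℂ N)
    (χplus : Gamma0Plus N →* ℂˣ) : Prop :=
  ∀ γ : CongruenceSubgroup.Gamma0 N,
    (χplus ⟨toSL2R (γ : Matrix.SpecialLinearGroup (Fin 2) ℤ),
        toSL2R_mem_Gamma0Plus N γ⟩ : ℂ) =
      χ ((((γ : Matrix.SpecialLinearGroup (Fin 2) ℤ) 1 1 : ℤ)) : ZMod N)

/-
Since `W_N` normalises the image of `Γ₀(N)` (conjugation sends `[[a, b], [c, d]]` to
`[[d, -c/N], [-bN, a]]`), lies outside it and squares to `-1`, the group `Γ₀⁺(N)` is the disjoint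
union of that image and its coset through `W_N`. A character `φ` of `Γ₀(N)` therefore extends iff it
is invariant under this conjugation and `φ(-1)` has a square root `ε`, the extensions being in
bijection with the choices of `ε = χ⁺(W_N)`; in `ℂˣ` there are exactly two. As `ad ≡ 1 (mod N)`,
invariance reads `χ(d)⁻¹ = χ(d)`, and every unit mod `N` occurs as such a `d`, so it means `χ² = 1`.
-/

open scoped MatrixGroups

structure IsIndexTwoExtension {K G : Type*} [Group K] [Group G]
    (ι : K →* G) (w : G) (σ : K → K) (k₀ : K) : Prop where
  injective : Function.Injective ι
  apply_ne : ∀ k, ι k ≠ w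
  mul_apply : ∀ k, w * ι k = ι (σ k) * w
  mul_self : w * w = ι k₀
  closure_eq_top : Subgroup.closure (Set.range ι ∪ {w}) = ⊤

namespace IsIndexTwoExtension

variable {K G A : Type*} [Group K] [Group G] [CommGroup A]
  {ι : K →* G} {w : G} {σ : K → K} {k₀ : K}

lemma inv_eq (h : IsIndexTwoExtension ι w σ k₀) : w⁻¹ = ι k₀⁻¹ * w := by
  rw [map_inv, ← h.mul_self]; group

lemma exists_eq_or_exists_mul_eq (h : IsIndexTwoExtension ι w σ k₀) (g : G) :
    (∃ k, ι k = g) ∨ ∃ k, ι k * w = g := by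
  have hg : g ∈ Subgroup.closure (Set.range ι ∪ {w}) := h.closure_eq_top ▸ Subgroup.mem_top g
  induction hg using Subgroup.closure_induction with
  | mem x hx =>
    rcases hx with hx | rfl
    · exact .inl hx
    · exact .inr ⟨1, by simp⟩
  | one => exact .inl ⟨1, map_one ι⟩
  | mul x y _ _ ihx ihy =>
    rcases ihx with ⟨k, rfl⟩ | ⟨k, rfl⟩ <;> rcases ihy with ⟨k', rfl⟩ | ⟨k', rfl⟩
    · exact .inl ⟨k * k', map_mul ι k k'⟩
    · exact .inr ⟨k * k', by rw [map_mul, mul_assoc]⟩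
    · exact .inr ⟨k * σ k', by rw [map_mul, mul_assoc, mul_assoc, h.mul_apply]⟩
    · refine .inl ⟨k * σ k' * k₀, ?_⟩
      rw [map_mul, map_mul, ← h.mul_self, mul_assoc (ι k) w, ← mul_assoc w, h.mul_apply]
      group
  | inv x _ ihx =>
    rcases ihx with ⟨k, rfl⟩ | ⟨k, rfl⟩
    · exact .inl ⟨k⁻¹, map_inv ι k⟩
    · refine .inr ⟨k₀⁻¹ * σ k⁻¹, ?_⟩
      rw [_root_.mul_inv_rev, h.inv_eq, mul_assoc, ← map_inv, h.mul_apply, map_mul, mul_assoc]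

lemma hom_ext (h : IsIndexTwoExtension ι w σ k₀) {M : Type*} [Monoid M] {ψ ψ' : G →* M}
    (hι : ψ.comp ι = ψ'.comp ι) (hw : ψ w = ψ' w) : ψ = ψ' := by
  refine MonoidHom.eq_of_eqOn_dense h.closure_eq_top ?_
  rintro _ (⟨k, rfl⟩ | rfl)
  · exact DFunLike.congr_fun hι k
  · exact hw

lemma apply_conj (h : IsIndexTwoExtension ι w σ k₀) (ψ : G →* A) (k : K) :
    ψ (ι (σ k)) = ψ (ι k) := by
  have := congrArg ψ (h.mul_apply k)
  rw [map_mul, map_mul, mul_comm] at this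
  exact (mul_right_cancel this).symm

lemma apply_mul_self (h : IsIndexTwoExtension ι w σ k₀) (ψ : G →* A) :
    ψ w * ψ w = ψ (ι k₀) := by
  rw [← map_mul, h.mul_self]

open Classical in
noncomputable def extendFun (ι : K →* G) (w : G) (φ : K →* A) (ε : A) (g : G) : A :=
  if g ∈ Set.range ι then φ (Function.invFun ι g) else φ (Function.invFun ι (g * w⁻¹)) * ε

lemma extendFun_apply (h : IsIndexTwoExtension ι w σ k₀) (φ : K →* A) (ε : A) (k : K) :
    extendFun ι w φ ε (ι k) = φ k := by
  rw [extendFun, if_pos (Set.mem_range_self k), Function.leftInverse_invFun h.injective]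

lemma extendFun_apply_mul (h : IsIndexTwoExtension ι w σ k₀) (φ : K →* A) (ε : A) (k : K) :
    extendFun ι w φ ε (ι k * w) = φ k * ε := by
  have hmem : ι k * w ∉ Set.range ι := by
    rintro ⟨k', hk'⟩
    refine h.apply_ne (k⁻¹ * k') ?_
    rw [map_mul, hk', map_inv, inv_mul_cancel_left]
  rw [extendFun, if_neg hmem, mul_inv_cancel_right, Function.leftInverse_invFun h.injective]

noncomputable def extend (h : IsIndexTwoExtension ι w σ k₀) (φ : K →* A)
    (hφ : ∀ k, φ (σ k) = φ k) (ε : A) (hε : ε * ε = φ k₀) : G →* A where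
  toFun := extendFun ι w φ ε
  map_one' := by rw [← map_one ι, h.extendFun_apply, map_one]
  map_mul' x y := by
    rcases h.exists_eq_or_exists_mul_eq x with ⟨k, rfl⟩ | ⟨k, rfl⟩ <;>
      rcases h.exists_eq_or_exists_mul_eq y with ⟨k', rfl⟩ | ⟨k', rfl⟩
    · simp only [← map_mul, h.extendFun_apply]
    · rw [← mul_assoc, ← map_mul, h.extendFun_apply_mul, h.extendFun_apply_mul,
        h.extendFun_apply, map_mul, mul_assoc]
    · rw [mul_assoc, h.mul_apply, ← mul_assoc, ← map_mul, h.extendFun_apply_mul,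
        h.extendFun_apply_mul, h.extendFun_apply, map_mul, hφ, mul_right_comm]
    · have : ι k * w * (ι k' * w) = ι (k * σ k' * k₀) := by
        rw [map_mul, map_mul, ← h.mul_self, mul_assoc (ι k) w, ← mul_assoc w, h.mul_apply]
        group
      rw [this, h.extendFun_apply, h.extendFun_apply_mul, h.extendFun_apply_mul, map_mul,
        map_mul, hφ, ← hε]
      ac_rfl

lemma extend_comp (h : IsIndexTwoExtension ι w σ k₀) (φ : K →* A)
    (hφ : ∀ k, φ (σ k) = φ k) (ε : A) (hε : ε * ε = φ k₀) :
    (h.extend φ hφ ε hε).comp ι = φ :=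
  MonoidHom.ext (h.extendFun_apply φ ε)

lemma extend_apply (h : IsIndexTwoExtension ι w σ k₀) (φ : K →* A)
    (hφ : ∀ k, φ (σ k) = φ k) (ε : A) (hε : ε * ε = φ k₀) :
    h.extend φ hφ ε hε w = ε := by
  show extendFun ι w φ ε w = ε
  simpa using h.extendFun_apply_mul φ ε 1

theorem exists_comp_eq_iff (h : IsIndexTwoExtension ι w σ k₀) (φ : K →* A) :
    (∃ ψ : G →* A, ψ.comp ι = φ) ↔ (∀ k, φ (σ k) = φ k) ∧ ∃ ε, ε * ε = φ k₀ := by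
  constructor
  · rintro ⟨ψ, rfl⟩
    exact ⟨h.apply_conj ψ, ψ w, h.apply_mul_self ψ⟩
  · rintro ⟨hφ, ε, hε⟩
    exact ⟨h.extend φ hφ ε hε, h.extend_comp φ hφ ε hε⟩

theorem ncard_comp_eq (h : IsIndexTwoExtension ι w σ k₀) (φ : K →* A)
    (hφ : ∀ k, φ (σ k) = φ k) :
    {ψ : G →* A | ψ.comp ι = φ}.ncard = {ε : A | ε * ε = φ k₀}.ncard := by
  have himage : (fun ψ : G →* A => ψ w) '' {ψ | ψ.comp ι = φ} = {ε | ε * ε = φ k₀} := by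
    ext ε
    constructor
    · rintro ⟨ψ, rfl, rfl⟩
      exact h.apply_mul_self ψ
    · intro hε
      exact ⟨h.extend φ hφ ε hε, h.extend_comp φ hφ ε hε, h.extend_apply φ hφ ε hε⟩
  refine himage ▸ (Set.InjOn.ncard_image ?_).symm
  intro ψ hψ ψ' hψ' hw
  exact h.hom_ext (hψ.trans hψ'.symm) hw

end IsIndexTwoExtension

lemma exists_units_mul_self_eq {K : Type*} [Field K] [IsAlgClosed K] (a : Kˣ) :
    ∃ ε : Kˣ, ε * ε = a := by
  obtain ⟨z, hz⟩ := IsAlgClosed.exists_eq_mul_self (a : K)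
  refine ⟨Units.mk0 z ?_, Units.ext hz.symm⟩
  rintro rfl
  simp at hz

lemma ncard_units_mul_self_eq {K : Type*} [Field K] [IsAlgClosed K] [CharZero K] (a : Kˣ) :
    {ε : Kˣ | ε * ε = a}.ncard = 2 := by
  obtain ⟨ε, rfl⟩ := exists_units_mul_self_eq a
  have : {η : Kˣ | η * η = ε * ε} = {ε, -ε} := by
    ext η
    simp [Units.ext_iff, mul_self_eq_mul_self_iff]
  rw [this, Set.ncard_pair (units_ne_neg_self ε)]

open CongruenceSubgroup

section Fricke

variable {N : ℕ}

lemma sqrt_natCast_ne_zero [NeZero N] : Real.sqrt N ≠ 0 :=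
  Real.sqrt_ne_zero'.2 (Nat.cast_pos.2 (NeZero.pos N))

lemma frickeMat_det [NeZero N] : (frickeMat N).det = 1 := by
  have := sqrt_natCast_ne_zero (N := N)
  rw [frickeMat, Matrix.det_fin_two_of]
  field_simp
  ring

variable (N) in
noncomputable def frickeSL [NeZero N] : SL(2, ℝ) := ⟨frickeMat N, frickeMat_det⟩

lemma coe_toSL2R (A : SL(2, ℤ)) :
    (toSL2R A : Matrix (Fin 2) (Fin 2) ℝ) = !![(A 0 0 : ℝ), A 0 1; A 1 0, A 1 1] := by
  ext i j
  fin_cases i <;> fin_cases j <;> rfl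

lemma frickeSL_mul_self [NeZero N] : frickeSL N * frickeSL N = -1 := by
  have := sqrt_natCast_ne_zero (N := N)
  refine Subtype.ext (?_ : frickeMat N * frickeMat N = -1)
  rw [frickeMat, mul_fin_two, one_fin_two]
  ext i j
  fin_cases i <;> fin_cases j <;> simp <;> field_simp

lemma dvd_of_mem_Gamma0 {A : SL(2, ℤ)} (hA : A ∈ Gamma0 N) : (N : ℤ) ∣ A 1 0 :=
  (ZMod.intCast_zmod_eq_zero_iff_dvd _ _).1 (Gamma0_mem.1 hA)

lemma det_SL2_expl {R : Type*} [CommRing R] (A : SL(2, R)) : A 0 0 * A 1 1 - A 0 1 * A 1 0 = 1 := by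
  rw [← Matrix.det_fin_two]; exact A.2

def frickeConj (γ : Gamma0 N) : Gamma0 N :=
  let A : SL(2, ℤ) := γ
  ⟨⟨!![A 1 1, -(A 1 0 / N); -(A 0 1 * N), A 0 0], by
    have hc : A 1 0 / N * N = A 1 0 := Int.ediv_mul_cancel (dvd_of_mem_Gamma0 γ.2)
    rw [Matrix.det_fin_two_of]
    linear_combination det_SL2_expl A - A 0 1 * hc⟩, Gamma0_mem.2 (by
    show ((-(A 0 1 * N) : ℤ) : ZMod N) = 0
    simp)⟩

lemma frickeSL_mul_toSL2R [NeZero N] (γ : Gamma0 N) :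
    frickeSL N * toSL2R γ = toSL2R (frickeConj γ) * frickeSL N := by
  have := sqrt_natCast_ne_zero (N := N)
  have hs := Real.sq_sqrt (Nat.cast_nonneg N : (0:ℝ) ≤ N)
  have hN : (N : ℝ) ≠ 0 := Nat.cast_ne_zero.2 (NeZero.ne N)
  obtain ⟨c, hc⟩ := dvd_of_mem_Gamma0 γ.2
  refine Subtype.ext (?_ : frickeMat N * toSL2R γ = toSL2R (frickeConj γ) * frickeMat N)
  rw [coe_toSL2R, coe_toSL2R, frickeMat, mul_fin_two, mul_fin_two]
  ext i j
  fin_cases i <;> fin_cases j <;> simp [frickeConj, hc] <;> field_simp <;> simp [hs, mul_comm]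

lemma toSL2R_ne_frickeSL [NeZero N] (hN : 1 < N) (A : SL(2, ℤ)) : toSL2R A ≠ frickeSL N := by
  intro h
  have entry (i j : Fin 2) : (A i j : ℝ) = frickeMat N i j :=
    congrArg (fun M : SL(2, ℝ) => M i j) h
  have h10 : (A 1 0 : ℝ) = Real.sqrt N := by simpa [frickeMat] using entry 1 0
  have h01 : (A 0 1 : ℝ) = -1 / Real.sqrt N := by simpa [frickeMat] using entry 0 1
  have hunit : A 1 0 * A 0 1 = -1 := by
    have : (A 1 0 * A 0 1 : ℝ) = -1 := by
      rw [h10, h01]; field_simp [sqrt_natCast_ne_zero (N := N)]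
    exact_mod_cast this
  have hsq : (A 1 0 : ℝ) ^ 2 = 1 := by
    rcases Int.eq_one_or_neg_one_of_mul_eq_neg_one hunit with h | h <;> simp [h]
  rw [h10, Real.sq_sqrt (Nat.cast_nonneg _)] at hsq
  have : N = 1 := by exact_mod_cast hsq
  omega

variable (N) in
noncomputable def gamma0ToPlus : Gamma0 N →* Gamma0Plus N :=
  (toSL2R.comp (Gamma0 N).subtype).codRestrict _ (toSL2R_mem_Gamma0Plus N)

variable (N) in
noncomputable def fricke [NeZero N] : Gamma0Plus N :=
  ⟨frickeSL N, Subgroup.subset_closure (Set.mem_union_right _ rfl)⟩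

variable (N) in
def gamma0NegOne : Gamma0 N := ⟨-1, by simp⟩

lemma range_gamma0ToPlus_union_fricke [NeZero N] :
    Set.range (gamma0ToPlus N) ∪ {fricke N} =
      ((↑) : Gamma0Plus N → SL(2, ℝ)) ⁻¹'
        (toSL2R '' (Gamma0 N : Set SL(2, ℤ)) ∪
          {g | (g : Matrix (Fin 2) (Fin 2) ℝ) = frickeMat N}) := by
  ext x
  simp only [Set.mem_union, Set.mem_range, Set.mem_singleton_iff, Set.mem_preimage,
    Set.mem_image, SetLike.mem_coe, Set.mem_ofPred_eq]
  refine or_congr ⟨?_, ?_⟩ (Subtype.ext_iff.trans Subtype.ext_iff)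
  · rintro ⟨γ, rfl⟩
    exact ⟨γ, γ.2, rfl⟩
  · rintro ⟨γ, hγ, h⟩
    exact ⟨⟨γ, hγ⟩, Subtype.ext h⟩

theorem isIndexTwoExtension_gamma0ToPlus [NeZero N] (hN : 1 < N) :
    IsIndexTwoExtension (gamma0ToPlus N) (fricke N) frickeConj (gamma0NegOne N) where
  injective γ δ h := Subtype.ext (SpecialLinearGroup.map_intCast_injective (congrArg Subtype.val h))
  apply_ne γ h := toSL2R_ne_frickeSL hN γ (congrArg Subtype.val h)
  mul_apply γ := Subtype.ext (frickeSL_mul_toSL2R γ)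
  mul_self := Subtype.ext <| (frickeSL_mul_self (N := N)).trans <| by
    simp [gamma0ToPlus, gamma0NegOne, toSL2R, SpecialLinearGroup.coe_int_neg]
  closure_eq_top := by
    rw [range_gamma0ToPlus_union_fricke]
    exact Subgroup.closure_closure_coe_preimage

lemma Gamma0Map_frickeConj_mul (γ : Gamma0 N) : Gamma0Map N (frickeConj γ) * Gamma0Map N γ = 1 := by
  have h := congrArg (Int.cast : ℤ → ZMod N) (det_SL2_expl γ)
  rwa [Int.cast_sub, Int.cast_mul, Int.cast_mul, Gamma0_mem.1 γ.2, mul_zero, sub_zero,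
    Int.cast_one] at h

lemma surjective_toHomUnits_Gamma0Map : Function.Surjective (Gamma0Map N).toHomUnits := by
  intro u
  obtain ⟨a, ha⟩ := ZMod.intCast_surjective ((u⁻¹ : (ZMod N)ˣ) : ZMod N)
  obtain ⟨d, hd⟩ := ZMod.intCast_surjective (u : ZMod N)
  have hdvd : (N : ℤ) ∣ a * d - 1 := by
    rw [← ZMod.intCast_zmod_eq_zero_iff_dvd]
    simp [ha, hd]
  refine ⟨⟨⟨!![a, (a * d - 1) / N; N, d], ?_⟩, Gamma0_mem.2 ?_⟩, Units.ext hd⟩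
  · rw [Matrix.det_fin_two_of, Int.ediv_mul_cancel hdvd]
    ring
  · show ((N : ℤ) : ZMod N) = 0
    simp

noncomputable def gamma0Char : DirichletCharacter ℂ N →* (Gamma0 N →* ℂˣ) :=
  (MonoidHom.compHom' (Gamma0Map N).toHomUnits).comp MulChar.mulEquivToUnitHom.toMonoidHom

lemma coe_gamma0Char_apply (χ : DirichletCharacter ℂ N) (γ : Gamma0 N) :
    (gamma0Char χ γ : ℂ) = χ ((γ : SL(2, ℤ)) 1 1 : ZMod N) :=
  MulChar.coe_equivToUnitHom χ _

lemma gamma0Char_injective : Function.Injective (gamma0Char (N := N)) := fun _ _ h =>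
  MulChar.mulEquivToUnitHom.injective ((MonoidHom.cancel_right surjective_toHomUnits_Gamma0Map).1 h)

lemma gamma0Char_frickeConj_mul (χ : DirichletCharacter ℂ N) (γ : Gamma0 N) :
    gamma0Char χ (frickeConj γ) * gamma0Char χ γ = 1 := by
  have : (Gamma0Map N).toHomUnits (frickeConj γ) * (Gamma0Map N).toHomUnits γ = 1 :=
    Units.ext (Gamma0Map_frickeConj_mul γ)
  change MulChar.mulEquivToUnitHom χ _ * MulChar.mulEquivToUnitHom χ _ = 1
  rw [← map_mul, this, map_one]

lemma gamma0Char_frickeConj_eq_iff (χ : DirichletCharacter ℂ N) :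
    (∀ γ, gamma0Char χ (frickeConj γ) = gamma0Char χ γ) ↔ χ ^ 2 = 1 := by
  rw [← map_eq_one_iff _ gamma0Char_injective, map_pow, MonoidHom.ext_iff]
  refine forall_congr' fun γ => ?_
  rw [eq_inv_of_mul_eq_one_left (gamma0Char_frickeConj_mul χ γ), MonoidHom.pow_apply,
    MonoidHom.one_apply, pow_two, mul_eq_one_iff_eq_inv, eq_comm]

lemma extendsPlus_iff (χ : DirichletCharacter ℂ N) (ψ : Gamma0Plus N →* ℂˣ) :
    ExtendsPlus N χ ψ ↔ ψ.comp (gamma0ToPlus N) = gamma0Char χ := by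
  simp only [MonoidHom.ext_iff, Units.ext_iff, coe_gamma0Char_apply]
  rfl

end Fricke

theorem stmt6 (N : ℕ) (hN : 1 < N) (χ : DirichletCharacter ℂ N) :
    ((∃ χplus : Gamma0Plus N →* ℂˣ, ExtendsPlus N χ χplus) ↔ χ ^ 2 = 1) ∧
    (χ ^ 2 = 1 → {χplus : Gamma0Plus N →* ℂˣ | ExtendsPlus N χ χplus}.ncard = 2) := by
  have : NeZero N := ⟨by omega⟩
  have hG := isIndexTwoExtension_gamma0ToPlus hN
  simp only [extendsPlus_iff]
  refine ⟨?_, fun hχ => ?_⟩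
  · rw [hG.exists_comp_eq_iff, gamma0Char_frickeConj_eq_iff]
    exact and_iff_left (exists_units_mul_self_eq _)
  · rw [hG.ncard_comp_eq _ ((gamma0Char_frickeConj_eq_iff χ).2 hχ), ncard_units_mul_self_eq]
end

section
/- Let N be an odd squarefree positive integer and let e be a positive divisor of N. Then the number of integers ϱ with 0 ≤ ϱ < 2N and ϱ² ≡ −4e (mod 4N) equals the product over the primes p dividing N/e of (1 + (−4e | p)), where (· | p) denotes the Legendre symbol modulo p. -/
/-!
Every solution `ϱ` is even, and `ϱ = 2σ` is a solution exactly when `σ² ≡ -e (mod N)`, so the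
count is the number of square roots of `-e` in `ZMod N`. For squarefree `N` the Chinese remainder
theorem makes this the product over `p ∣ N` of the number of square roots of `-e` modulo `p`,
which is `1 + (-e | p) = 1 + (-4e | p)`; for `p ∣ e` this factor is `1`.
-/

open Finset

theorem Finset.card_filter_range_eq_card_subtype (n : ℕ) [NeZero n] (P : ZMod n → Prop)
    [DecidablePred P] :
    ((range n).filter fun k : ℕ => P k).card = Fintype.card {x // P x} := by
  rw [Fintype.card_subtype]
  refine card_nbij' (fun k => (k : ZMod n)) ZMod.val ?_ ?_ ?_ ?_
  · intro k hk
    simpa using (mem_filter.mp hk).2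
  · intro x hx
    simpa [ZMod.val_lt] using (mem_filter.mp hx).2
  · intro k hk
    exact ZMod.val_cast_of_lt (mem_range.mp (mem_filter.mp hk).1)
  · intro x _
    exact ZMod.natCast_zmod_val x

theorem Int.two_dvd_of_four_dvd_sq_add_four_mul {m c : ℤ} (h : 4 ∣ m ^ 2 + 4 * c) : 2 ∣ m :=
  Int.prime_two.dvd_of_dvd_pow (n := 2) <|
    dvd_trans (by norm_num) ((dvd_add_left (dvd_mul_right 4 c)).mp h)

theorem Int.four_mul_dvd_two_mul_sq_add_four_mul_iff (n m c : ℤ) :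
    4 * n ∣ (2 * m) ^ 2 + 4 * c ↔ n ∣ m ^ 2 + c := by
  rw [show (2 * m) ^ 2 + 4 * c = 4 * (m ^ 2 + c) by ring]
  exact mul_dvd_mul_iff_left four_ne_zero

theorem card_filter_range_two_mul_four_mul_dvd_sq_add (n : ℕ) (c : ℤ) :
    ((range (2 * n)).filter fun k : ℕ => 4 * (n : ℤ) ∣ (k : ℤ) ^ 2 + 4 * c).card
      = ((range n).filter fun k : ℕ => (n : ℤ) ∣ (k : ℤ) ^ 2 + c).card := by
  have two_dvd {k : ℕ} (h : 4 * (n : ℤ) ∣ (k : ℤ) ^ 2 + 4 * c) : 2 ∣ k :=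
    Int.ofNat_dvd.mp (Int.two_dvd_of_four_dvd_sq_add_four_mul ((dvd_mul_right 4 _).trans h))
  symm
  refine card_nbij' (2 * ·) (· / 2) ?_ ?_ ?_ ?_
  · intro k hk
    simp only [coe_filter, mem_range, Set.mem_ofPred_eq] at hk ⊢
    push_cast
    exact ⟨by omega, (Int.four_mul_dvd_two_mul_sq_add_four_mul_iff _ _ _).mpr hk.2⟩
  · intro k hk
    simp only [coe_filter, mem_range, Set.mem_ofPred_eq] at hk ⊢
    obtain ⟨m, rfl⟩ := two_dvd hk.2
    push_cast at hk
    rw [Nat.mul_div_cancel_left _ two_pos]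
    exact ⟨by omega, (Int.four_mul_dvd_two_mul_sq_add_four_mul_iff _ _ _).mp hk.2⟩
  · intro k _
    simp
  · intro k hk
    exact Nat.mul_div_cancel' (two_dvd (mem_filter.mp hk).2)

theorem ZMod.intCast_dvd_sq_add_iff (n : ℕ) (k c : ℤ) :
    (n : ℤ) ∣ k ^ 2 + c ↔ (k : ZMod n) ^ 2 = ((-c : ℤ) : ZMod n) := by
  rw [← ZMod.intCast_zmod_eq_zero_iff_dvd]
  push_cast
  exact add_eq_zero_iff_eq_neg

theorem card_filter_range_dvd_sq_add_eq_natCard (n : ℕ) [NeZero n] (c : ℤ) :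
    ((range n).filter fun k : ℕ => (n : ℤ) ∣ (k : ℤ) ^ 2 + c).card
      = Nat.card {x : ZMod n // x ^ 2 = ((-c : ℤ) : ZMod n)} := by
  rw [Nat.card_eq_fintype_card, ← card_filter_range_eq_card_subtype]
  refine congrArg card (filter_congr fun k _ => ?_)
  rw [ZMod.intCast_dvd_sq_add_iff, Int.cast_natCast]

theorem ZMod.natCard_sq_eq_intCast_of_squarefree {n : ℕ} (hn : Squarefree n) (a : ℤ) :
    Nat.card {x : ZMod n // x ^ 2 = (a : ZMod n)}
      = ∏ p ∈ n.primeFactors, Nat.card {x : ZMod p // x ^ 2 = (a : ZMod p)} := by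
  have hc : Pairwise (Function.onFun Nat.Coprime fun p : n.primeFactors => (p : ℕ)) :=
    fun p q hpq => (Nat.coprime_primes (Nat.prime_of_mem_primeFactors p.2)
      (Nat.prime_of_mem_primeFactors q.2)).mpr (Subtype.coe_ne_coe.mpr hpq)
  have hprod : n = ∏ p : n.primeFactors, (p : ℕ) := by
    rw [prod_coe_sort n.primeFactors fun p => p]
    exact (Nat.prod_primeFactors_of_squarefree hn).symm
  let crt : ZMod n ≃+* Π p : n.primeFactors, ZMod p :=
    (ZMod.ringEquivCongr hprod).trans (ZMod.prodEquivPi _ hc)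
  have hsq (x : ZMod n) :
      x ^ 2 = (a : ZMod n) ↔ ∀ p : n.primeFactors, crt x p ^ 2 = (a : ZMod p) := by
    rw [← crt.injective.eq_iff, map_pow, map_intCast, funext_iff]
    rfl
  calc Nat.card {x : ZMod n // x ^ 2 = (a : ZMod n)}
      = Nat.card (Π p : n.primeFactors, {y : ZMod p // y ^ 2 = (a : ZMod p)}) :=
        Nat.card_congr ((crt.toEquiv.subtypeEquiv hsq).trans Equiv.subtypePiEquivPi)
    _ = ∏ p : n.primeFactors, Nat.card {y : ZMod p // y ^ 2 = (a : ZMod p)} := Nat.card_pi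
    _ = ∏ p ∈ n.primeFactors, Nat.card {y : ZMod p // y ^ 2 = (a : ZMod p)} :=
        prod_coe_sort n.primeFactors fun p => Nat.card {y : ZMod p // y ^ 2 = (a : ZMod p)}

theorem ZMod.natCard_sq_eq_intCast_of_prime {p : ℕ} [Fact p.Prime] (hp : p ≠ 2) (a : ℤ) :
    (Nat.card {x : ZMod p // x ^ 2 = (a : ZMod p)} : ℤ) = 1 + jacobiSym a p := by
  rw [← jacobiSym.legendreSym.to_jacobiSym, add_comm, ← legendreSym.card_sqrts p hp a,
    Nat.card_eq_fintype_card, Set.toFinset_card]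
  rfl

theorem jacobiSym.four_mul {b : ℕ} (hb : Odd b) (a : ℤ) : jacobiSym (4 * a) b = jacobiSym a b := by
  have h2b : Int.gcd 2 b = 1 := by
    change Int.gcd ((2 : ℕ) : ℤ) b = 1
    rw [Int.gcd_natCast_natCast]
    exact (Nat.coprime_two_left).mpr hb
  rw [jacobiSym.mul_left, show (4 : ℤ) = 2 ^ 2 by norm_num, jacobiSym.sq_one' h2b, one_mul]

theorem Nat.prod_primeFactors_eq_prod_primeFactors_div {M : Type*} [CommMonoid M] {n e : ℕ}
    (hn : n ≠ 0) (he : e ∣ n) (f : ℕ → M) (hf : ∀ p ∈ e.primeFactors, f p = 1) :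
    ∏ p ∈ n.primeFactors, f p = ∏ p ∈ (n / e).primeFactors, f p := by
  refine (prod_subset (Nat.primeFactors_mono (Nat.div_dvd_of_dvd he) hn)
    fun p hpn hpne => hf p ?_).symm
  have hne : e * (n / e) ≠ 0 := by rwa [Nat.mul_div_cancel' he]
  rw [← Nat.mul_div_cancel' he, Nat.primeFactors_mul (left_ne_zero_of_mul hne)
    (right_ne_zero_of_mul hne)] at hpn
  exact (mem_union.mp hpn).resolve_right hpne

theorem stmt10_general (N e : ℕ) (hodd : Odd N) (hsf : Squarefree N)
    (he : e ∣ N) :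
    (((Finset.range (2 * N)).filter
        (fun ϱ : ℕ => (4 * (N : ℤ)) ∣ ((ϱ : ℤ) ^ 2 + 4 * (e : ℤ)))).card : ℤ)
      = ∏ p ∈ (N / e).primeFactors, (1 + jacobiSym (-(4 * (e : ℤ))) p) := by
  have : NeZero N := ⟨hsf.ne_zero⟩
  rw [card_filter_range_two_mul_four_mul_dvd_sq_add, card_filter_range_dvd_sq_add_eq_natCard,
    ZMod.natCard_sq_eq_intCast_of_squarefree hsf, Nat.cast_prod,
    ← Nat.prod_primeFactors_eq_prod_primeFactors_div hsf.ne_zero he]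
  · refine prod_congr rfl fun p hp => ?_
    have := Fact.mk (Nat.prime_of_mem_primeFactors hp)
    have hpN := Nat.dvd_of_mem_primeFactors hp
    rw [ZMod.natCard_sq_eq_intCast_of_prime (hodd.ne_two_of_dvd_nat hpN), neg_mul_eq_mul_neg,
      jacobiSym.four_mul (hodd.of_dvd_nat hpN)]
  · intro p hp
    have := Fact.mk (Nat.prime_of_mem_primeFactors hp)
    rw [← jacobiSym.legendreSym.to_jacobiSym, (legendreSym.eq_zero_iff p _).mpr, add_zero]
    simp [(ZMod.natCast_eq_zero_iff e p).mpr (Nat.dvd_of_mem_primeFactors hp)]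

theorem stmt10 (N e : ℕ) (hN : 0 < N) (hodd : Odd N) (hsf : Squarefree N)
    (he : e ∣ N) :
    (((Finset.range (2 * N)).filter
        (fun ϱ : ℕ => (4 * (N : ℤ)) ∣ ((ϱ : ℤ) ^ 2 + 4 * (e : ℤ)))).card : ℤ)
      = ∏ p ∈ (N / e).primeFactors, (1 + jacobiSym (-(4 * (e : ℤ))) p) :=
  stmt10_general N e hodd hsf he
end
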